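/- Let k ≥ 2 be an integer and let x₀, x₁ be independent random variables each uniformly distributed on {1, 2, ..., k}. Let M := E(|x₁ - x₀|). Then the third centered moment E((|x₁ - x₀| - M)³) = (k - 1)(k - 2)(k + 2)(k + 1)(2k² - 5)/(270k³). -/

import Mathlib

open MeasureTheory ProbabilityTheory
open scoped ENNReal

/-- The uniform probability measure on the integers `{1, ..., k}` (as a measure on `ℕ`). -/
noncomputable def unifMeasure (k : ℕ) : Measure ℕ :=
  (k : ℝ≥0∞)⁻¹ • ∑ i ∈ Finset.Icc 1 k, Measure.dirac i

/-!
By independence the law of `(x₀, x₁)` is the uniform measure on `{1, …, k}²`, so every moment of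
`|x₁ - x₀|` is `k⁻²` times a double sum `∑ᵢ ∑ⱼ |j - i| ^ p`. Passing from `k` to `k + 1` adds
the new row and column, which together contribute `2 ∑_{d ≤ k} d ^ p`; with the classical power
sums this gives closed forms for `p = 1, 2, 3`, and the third centered moment is a polynomial in
these.
-/

open Finset

section UniformMeasure

variable {E : Type*} [NormedAddCommGroup E] {k : ℕ}

lemma unifMeasure_zero : unifMeasure 0 = 0 := by
  simp [unifMeasure]

lemma isProbabilityMeasure_unifMeasure (hk : k ≠ 0) : IsProbabilityMeasure (unifMeasure k) :=
  ⟨by simpa [unifMeasure] using ENNReal.inv_mul_cancel (Nat.cast_ne_zero.2 hk) (by simp)⟩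

lemma integrable_unifMeasure (hk : k ≠ 0) (f : ℕ → E) : Integrable f (unifMeasure k) :=
  (integrable_finsetSum_measure.2 fun _ _ => integrable_dirac enorm_lt_top).smul_measure
    (by simp [hk])

variable [NormedSpace ℝ E] [CompleteSpace E]

lemma integral_unifMeasure (f : ℕ → E) :
    ∫ x, f x ∂unifMeasure k = (k : ℝ)⁻¹ • ∑ i ∈ Icc 1 k, f i := by
  rw [unifMeasure, integral_smul_measure,
    integral_finsetSum_measure fun _ _ => integrable_dirac enorm_lt_top]
  simp

lemma integral_unifMeasure_prod (hk : k ≠ 0) (F : ℕ × ℕ → E) :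
    ∫ p, F p ∂(unifMeasure k).prod (unifMeasure k)
      = ((k : ℝ) ^ 2)⁻¹ • ∑ i ∈ Icc 1 k, ∑ j ∈ Icc 1 k, F (i, j) := by
  have := isProbabilityMeasure_unifMeasure hk
  have hF : Integrable F ((unifMeasure k).prod (unifMeasure k)) :=
    (integrable_prod_iff StronglyMeasurable.of_discrete.aestronglyMeasurable).2
      ⟨.of_forall fun _ => integrable_unifMeasure hk _, integrable_unifMeasure hk _⟩
  simp only [integral_prod F hF, integral_unifMeasure, smul_sum, smul_smul, pow_two, mul_inv]

lemma ne_zero_of_map_eq_unifMeasure {Ω : Type*} [MeasurableSpace Ω] {μ : Measure Ω} [NeZero μ]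
    {x : Ω → ℕ} (hx : AEMeasurable x μ) (h : μ.map x = unifMeasure k) : k ≠ 0 := by
  rintro rfl
  rw [unifMeasure_zero, Measure.map_eq_zero_iff hx] at h
  exact NeZero.ne μ h

lemma ProbabilityTheory.IndepFun.integral_comp_of_map_eq_unifMeasure {Ω : Type*}
    [MeasurableSpace Ω] {μ : Measure Ω} [IsProbabilityMeasure μ] {x₀ x₁ : Ω → ℕ}
    (hindep : IndepFun x₀ x₁ μ) (hm0 : AEMeasurable x₀ μ) (hm1 : AEMeasurable x₁ μ)
    (hd0 : μ.map x₀ = unifMeasure k) (hd1 : μ.map x₁ = unifMeasure k) (F : ℕ → ℕ → E) :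
    ∫ ω, F (x₀ ω) (x₁ ω) ∂μ = ((k : ℝ) ^ 2)⁻¹ • ∑ i ∈ Icc 1 k, ∑ j ∈ Icc 1 k, F i j := by
  have hlaw : μ.map (fun ω => (x₀ ω, x₁ ω)) = (unifMeasure k).prod (unifMeasure k) := by
    rw [(indepFun_iff_map_prod_eq_prod_map_map hm0 hm1).1 hindep, hd0, hd1]
  rw [← integral_unifMeasure_prod (ne_zero_of_map_eq_unifMeasure hm0 hd0) fun p => F p.1 p.2,
    ← hlaw, integral_map (hm0.prodMk hm1) StronglyMeasurable.of_discrete.aestronglyMeasurable]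

end UniformMeasure

section AbsDiffSums

lemma sum_Icc_natCast (n : ℕ) : ∑ d ∈ Icc 1 n, (d : ℝ) = n * (n + 1) / 2 := by
  induction n with
  | zero => simp
  | succ n ih => rw [sum_Icc_succ_top (by omega), ih]; push_cast; ring

lemma sum_Icc_natCast_sq (n : ℕ) :
    ∑ d ∈ Icc 1 n, (d : ℝ) ^ 2 = n * (n + 1) * (2 * n + 1) / 6 := by
  induction n with
  | zero => simp
  | succ n ih => rw [sum_Icc_succ_top (by omega), ih]; push_cast; ring

lemma sum_Icc_natCast_pow_three (n : ℕ) : ∑ d ∈ Icc 1 n, (d : ℝ) ^ 3 = (n * (n + 1) / 2) ^ 2 := by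
  induction n with
  | zero => simp
  | succ n ih => rw [sum_Icc_succ_top (by omega), ih]; push_cast; ring

lemma sum_Icc_comp_abs_succ_sub (g : ℝ → ℝ) (n : ℕ) :
    ∑ i ∈ Icc 1 n, g |(n + 1 : ℝ) - i| = ∑ d ∈ Icc 1 n, g d := by
  have hmem {i : ℕ} (hi : i ∈ Icc 1 n) : n + 1 - i ∈ Icc 1 n := by
    rw [mem_Icc] at *; omega
  have hinv {i : ℕ} (hi : i ∈ Icc 1 n) : n + 1 - (n + 1 - i) = i := by
    rw [mem_Icc] at hi; omega
  refine sum_nbij' (n + 1 - ·) (n + 1 - ·) (fun _ => hmem) (fun _ => hmem) (fun _ => hinv)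
    (fun _ => hinv) fun i hi => ?_
  have hin : i ≤ n + 1 := (mem_Icc.1 hi).2.trans n.le_succ
  rw [Nat.cast_sub hin, abs_of_nonneg (sub_nonneg.2 (by exact_mod_cast hin))]
  push_cast; rfl

lemma sum_Icc_succ_sum_Icc_succ_comp_abs_sub (g : ℝ → ℝ) (hg : g 0 = 0) (n : ℕ) :
    ∑ i ∈ Icc 1 (n + 1), ∑ j ∈ Icc 1 (n + 1), g |(j : ℝ) - i|
      = ∑ i ∈ Icc 1 n, ∑ j ∈ Icc 1 n, g |(j : ℝ) - i| + 2 * ∑ d ∈ Icc 1 n, g d := by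
  simp only [sum_Icc_succ_top (Nat.le_add_left 1 n), sum_add_distrib, Nat.cast_add, Nat.cast_one,
    sub_self, abs_zero, hg, add_zero]
  simp only [abs_sub_comm _ ((n : ℝ) + 1), sum_Icc_comp_abs_succ_sub]
  ring

lemma sum_sum_abs_sub (n : ℕ) :
    ∑ i ∈ Icc 1 n, ∑ j ∈ Icc 1 n, |(j : ℝ) - i| = n * ((n : ℝ) ^ 2 - 1) / 3 := by
  induction n with
  | zero => simp
  | succ n ih =>
    rw [sum_Icc_succ_sum_Icc_succ_comp_abs_sub (fun x => x) rfl, ih, sum_Icc_natCast]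
    push_cast; ring

lemma sum_sum_abs_sub_sq (n : ℕ) :
    ∑ i ∈ Icc 1 n, ∑ j ∈ Icc 1 n, |(j : ℝ) - i| ^ 2 = (n : ℝ) ^ 2 * ((n : ℝ) ^ 2 - 1) / 6 := by
  induction n with
  | zero => simp
  | succ n ih =>
    rw [sum_Icc_succ_sum_Icc_succ_comp_abs_sub (· ^ 2) (by simp), ih, sum_Icc_natCast_sq]
    push_cast; ring

lemma sum_sum_abs_sub_pow_three (n : ℕ) :
    ∑ i ∈ Icc 1 n, ∑ j ∈ Icc 1 n, |(j : ℝ) - i| ^ 3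
      = (n : ℝ) ^ 3 * ((n : ℝ) - 1) ^ 2 / 2
        - n * ((n : ℝ) - 1) * (2 * n - 1) * (3 * (n : ℝ) ^ 2 - 3 * n - 1) / 15 := by
  induction n with
  | zero => simp
  | succ n ih =>
    rw [sum_Icc_succ_sum_Icc_succ_comp_abs_sub (· ^ 3) (by simp), ih, sum_Icc_natCast_pow_three]
    push_cast; ring

end AbsDiffSums

theorem third_centered_moment_increment_uniform_general
    {Ω : Type*} [MeasurableSpace Ω] (μ : Measure Ω) [IsProbabilityMeasure μ]
    (k : ℕ) (x₀ x₁ : Ω → ℕ)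
    (hm0 : Measurable x₀) (hm1 : Measurable x₁)
    (hd0 : Measure.map x₀ μ = unifMeasure k)
    (hd1 : Measure.map x₁ μ = unifMeasure k)
    (hindep : IndepFun x₀ x₁ μ)
    (M : ℝ) (hM : M = ∫ ω, |(x₁ ω : ℝ) - (x₀ ω : ℝ)| ∂μ) :
    ∫ ω, (|(x₁ ω : ℝ) - (x₀ ω : ℝ)| - M) ^ 3 ∂μ
      = ((k : ℝ) - 1) * ((k : ℝ) - 2) * ((k : ℝ) + 2) * ((k : ℝ) + 1)
          * (2 * (k : ℝ) ^ 2 - 5) / (270 * (k : ℝ) ^ 3) := by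
  have hk0 : (k : ℝ) ≠ 0 := Nat.cast_ne_zero.2 (ne_zero_of_map_eq_unifMeasure hm0.aemeasurable hd0)
  have hlaw := hindep.integral_comp_of_map_eq_unifMeasure (E := ℝ)
    hm0.aemeasurable hm1.aemeasurable hd0 hd1
  have hMk : M = ((k : ℝ) ^ 2 - 1) / (3 * k) := by
    rw [hM, hlaw fun i j => |(j : ℝ) - i|, smul_eq_mul, sum_sum_abs_sub]
    field_simp
  have hcube (y : ℝ) : (y - M) ^ 3 = y ^ 3 - 3 * M * y ^ 2 + 3 * M ^ 2 * y - M ^ 3 := by ring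
  rw [hlaw fun i j => (|(j : ℝ) - i| - M) ^ 3, smul_eq_mul]
  simp only [hcube, sum_sub_distrib, sum_add_distrib, ← mul_sum, sum_const, Nat.card_Icc,
    Nat.add_sub_cancel, nsmul_eq_mul]
  rw [sum_sum_abs_sub, sum_sum_abs_sub_sq, sum_sum_abs_sub_pow_three, hMk]
  field_simp
  ring

theorem third_centered_moment_increment_uniform
    {Ω : Type*} [MeasurableSpace Ω] (μ : Measure Ω) [IsProbabilityMeasure μ]
    (k : ℕ) (hk : 2 ≤ k) (x₀ x₁ : Ω → ℕ)
    (hm0 : Measurable x₀) (hm1 : Measurable x₁)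
    (hd0 : Measure.map x₀ μ = unifMeasure k)
    (hd1 : Measure.map x₁ μ = unifMeasure k)
    (hindep : IndepFun x₀ x₁ μ)
    (M : ℝ) (hM : M = ∫ ω, |(x₁ ω : ℝ) - (x₀ ω : ℝ)| ∂μ) :
    ∫ ω, (|(x₁ ω : ℝ) - (x₀ ω : ℝ)| - M) ^ 3 ∂μ
      = ((k : ℝ) - 1) * ((k : ℝ) - 2) * ((k : ℝ) + 2) * ((k : ℝ) + 1)
          * (2 * (k : ℝ) ^ 2 - 5) / (270 * (k : ℝ) ^ 3) :=
  third_centered_moment_increment_uniform_general μ k x₀ x₁ hm0 hm1 hd0 hd1 hindep M hM
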